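/- Let α > −1, a > 0 and n ∈ ℕ. Then for all x > 0, the second derivative of the generalized Laguerre function satisfies (ψ_{n,α}^a)''(x) = [(α² − 1/4)/x² − 2a²(2n + α + 1) + a⁴x²]·ψ_{n,α}^a(x). -/

import Mathlib

open Real

/-- The generalized Laguerre polynomial of order `α` and degree `n`. -/
noncomputable def laguerreL (α : ℝ) (n : ℕ) (x : ℝ) : ℝ :=
  ∑ k ∈ Finset.range (n + 1), (-1 : ℝ) ^ k *
    (Real.Gamma (n + α + 1) / (Real.Gamma (k + α + 1) * (n - k).factorial * k.factorial)) * x ^ k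

/-- The normalized generalized Laguerre polynomial. -/
noncomputable def laguerreLTilde (α : ℝ) (n : ℕ) (x : ℝ) : ℝ :=
  Real.sqrt (n.factorial / Real.Gamma (n + α + 1)) * laguerreL α n x

/-- The generalized Laguerre function of parameter `a`. -/
noncomputable def psiLag (α a : ℝ) (n : ℕ) (x : ℝ) : ℝ :=
  Real.sqrt 2 * a ^ (α + 1) * x ^ (α + 1/2) * Real.exp (-(a * x) ^ 2 / 2) *
    laguerreLTilde α n (a ^ 2 * x ^ 2)

/-!
Expanding the Laguerre polynomial writes `ψ` as a finite combination `∑ c_k g_{p_k}` of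
`g_p(x) = x^p e^{-(ax)²/2}` with `p_k = α + 1/2 + 2k`. Each `g_p` satisfies
`g_p'' = (p(p-1)/x² - a²(2p+1) + a⁴x²) g_p`, and this multiplier exceeds the claimed one by
`4k(k+α)/x² + 4a²(n-k)` at `p = p_k`. Since `g_{p_{k+1}} = x² g_{p_k}`, the recurrence
`(k+1)(k+1+α) c_{k+1} = -a²(n-k) c_k` of the Laguerre coefficients makes these excess terms
cancel in consecutive pairs.
-/

open Filter Topology Finset

noncomputable def gaussPow (a p x : ℝ) : ℝ := x ^ p * exp (-(a * x) ^ 2 / 2)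

section gaussPow

variable {a p x : ℝ}

lemma gaussPow_add_two (hx : 0 < x) : gaussPow a (p + 2) x = x ^ 2 * gaussPow a p x := by
  rw [gaussPow, gaussPow, rpow_add hx, rpow_two]
  ring

lemma hasDerivAt_gaussPow (hx : 0 < x) :
    HasDerivAt (gaussPow a p) ((p / x - a ^ 2 * x) * gaussPow a p x) x := by
  have hpow : HasDerivAt (fun y : ℝ => y ^ p) (p * x ^ (p - 1)) x :=
    hasDerivAt_rpow_const (Or.inl hx.ne')
  have hexp : HasDerivAt (fun y : ℝ => -(a * y) ^ 2 / 2) (-(a ^ 2 * x)) x := by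
    rw [show (fun y : ℝ => -(a * y) ^ 2 / 2) = fun y => -a ^ 2 / 2 * y ^ 2 by ext; ring]
    exact ((hasDerivAt_pow 2 x).const_mul _).congr_deriv (by norm_num; ring)
  refine (hpow.mul hexp.exp).congr_deriv ?_
  rw [gaussPow, rpow_sub_one hx.ne']
  field_simp
  ring

lemma hasDerivAt_deriv_gaussPow (hx : 0 < x) :
    HasDerivAt (deriv (gaussPow a p))
      ((p * (p - 1) / x ^ 2 - a ^ 2 * (2 * p + 1) + a ^ 4 * x ^ 2) * gaussPow a p x) x := by
  have hderiv : deriv (gaussPow a p) =ᶠ[𝓝 x] fun y => (p / y - a ^ 2 * y) * gaussPow a p y :=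
    eventuallyEq_of_mem (Ioi_mem_nhds hx) fun y hy => (hasDerivAt_gaussPow hy).deriv
  have hfactor : HasDerivAt (fun y => p / y - a ^ 2 * y) (-p / x ^ 2 - a ^ 2) x :=
    (((hasDerivAt_inv hx.ne').const_mul p).sub ((hasDerivAt_id x).const_mul (a ^ 2))).congr_deriv
      (by field_simp)
  refine ((hfactor.mul (hasDerivAt_gaussPow hx)).congr_of_eventuallyEq hderiv).congr_deriv ?_
  field_simp
  ring

end gaussPow

lemma deriv_deriv_sum {𝕜 ι : Type*} [NontriviallyNormedField 𝕜] {s : Finset ι} {c : ι → 𝕜}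
    {f : ι → 𝕜 → 𝕜} {f'' : ι → 𝕜} {x : 𝕜}
    (hf : ∀ᶠ y in 𝓝 x, ∀ i ∈ s, DifferentiableAt 𝕜 (f i) y)
    (hf'' : ∀ i ∈ s, HasDerivAt (deriv (f i)) (f'' i) x) :
    deriv (deriv fun y => ∑ i ∈ s, c i * f i y) x = ∑ i ∈ s, c i * f'' i := by
  have hderiv : deriv (fun y => ∑ i ∈ s, c i * f i y) =ᶠ[𝓝 x]
      fun y => ∑ i ∈ s, c i * deriv (f i) y := by
    filter_upwards [hf] with y hy
    exact (HasDerivAt.fun_sum fun i hi => (hy i hi).hasDerivAt.const_mul (c i)).deriv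
  rw [hderiv.deriv_eq]
  exact (HasDerivAt.fun_sum fun i hi => (hf'' i hi).const_mul (c i)).deriv

noncomputable def laguerreCoeff (α : ℝ) (n k : ℕ) : ℝ :=
  (-1 : ℝ) ^ k * (Gamma (n + α + 1) / (Gamma (k + α + 1) * (n - k).factorial * k.factorial))

lemma laguerreCoeff_succ {α : ℝ} (hα : -1 < α) {n k : ℕ} (hk : k < n) :
    (k + 1) * (k + 1 + α) * laguerreCoeff α n (k + 1) = -((n - k) * laguerreCoeff α n k) := by
  have hpos : 0 < (k : ℝ) + α + 1 := by linarith [(Nat.cast_nonneg k : (0 : ℝ) ≤ k)]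
  have hGamma_succ : Gamma ((k + 1 : ℕ) + α + 1) = ((k : ℝ) + α + 1) * Gamma (k + α + 1) := by
    rw [← Gamma_add_one hpos.ne']
    push_cast
    ring_nf
  have hfac : ((n - k).factorial : ℝ) = (n - k) * (n - (k + 1)).factorial := by
    rw [show n - k = n - (k + 1) + 1 by omega, Nat.factorial_succ]
    push_cast [Nat.cast_sub hk]
    ring
  have hGamma : Gamma (k + α + 1) ≠ 0 := (Gamma_pos_of_pos hpos).ne'
  have hnk : (n : ℝ) - k ≠ 0 := sub_ne_zero.mpr (by exact_mod_cast hk.ne')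
  rw [laguerreCoeff, laguerreCoeff, hGamma_succ, hfac, Nat.factorial_succ]
  push_cast
  field_simp
  ring

noncomputable def psiLagCoeff (α a : ℝ) (n k : ℕ) : ℝ :=
  √2 * a ^ (α + 1) * √(n.factorial / Gamma (n + α + 1)) * laguerreCoeff α n k * a ^ (2 * k)

lemma psiLagCoeff_succ {α : ℝ} (hα : -1 < α) (a : ℝ) {n k : ℕ} (hk : k < n) :
    (k + 1) * (k + 1 + α) * psiLagCoeff α a n (k + 1) =
      -(a ^ 2 * (n - k) * psiLagCoeff α a n k) := by
  unfold psiLagCoeff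
  linear_combination
    (√2 * a ^ (α + 1) * √(n.factorial / Gamma (n + α + 1)) * a ^ (2 * (k + 1))) *
      laguerreCoeff_succ hα hk

lemma psiLag_eq_sum {α a : ℝ} {n : ℕ} {x : ℝ} (hx : 0 < x) :
    psiLag α a n x =
      ∑ k ∈ range (n + 1), psiLagCoeff α a n k * gaussPow a (α + 1/2 + 2 * k) x := by
  rw [psiLag, laguerreLTilde, laguerreL, mul_sum, mul_sum]
  refine sum_congr rfl fun k _ => ?_
  rw [gaussPow, psiLagCoeff, laguerreCoeff, rpow_add hx (α + 1/2),
    show (2 : ℝ) * k = ((2 * k : ℕ) : ℝ) by push_cast; ring, rpow_natCast, pow_mul, pow_mul,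
    ← mul_pow]
  ring

lemma sum_range_add_eq_zero_of_shift {M : Type*} [AddCommMonoid M] {A B : ℕ → M} {n : ℕ}
    (hA : A 0 = 0) (hB : B n = 0) (hAB : ∀ k < n, A (k + 1) + B k = 0) :
    ∑ k ∈ range (n + 1), (A k + B k) = 0 := by
  rw [sum_add_distrib, sum_range_succ' A, sum_range_succ B, hA, hB, add_zero, add_zero,
    ← sum_add_distrib]
  exact sum_eq_zero fun k hk => hAB k (mem_range.mp hk)

lemma sum_gaussPow_eq_zero_of_succ {α a x : ℝ} {n : ℕ} {c : ℕ → ℝ}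
    (hc : ∀ k < n, (k + 1) * (k + 1 + α) * c (k + 1) = -(a ^ 2 * (n - k) * c k)) (hx : 0 < x) :
    ∑ k ∈ range (n + 1),
      c k * ((4 * k * (k + α) / x ^ 2 + 4 * a ^ 2 * (n - k)) *
        gaussPow a (α + 1/2 + 2 * k) x) = 0 := by
  convert sum_range_add_eq_zero_of_shift
    (A := fun k => c k * (4 * k * (k + α) / x ^ 2 * gaussPow a (α + 1/2 + 2 * k) x))
    (B := fun k => c k * (4 * a ^ 2 * (n - k) * gaussPow a (α + 1/2 + 2 * k) x))
    (n := n) (by simp) (by simp) fun k hk => ?_ using 2 with k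
  · ring
  have hshift : gaussPow a (α + 1/2 + 2 * (k + 1 : ℕ)) x =
      x ^ 2 * gaussPow a (α + 1/2 + 2 * k) x := by
    rw [← gaussPow_add_two hx]
    push_cast
    ring_nf
  simp only [hshift]
  set g := gaussPow a (α + 1/2 + 2 * k) x
  push_cast
  field_simp
  linear_combination 4 * g * hc k hk

theorem stmt19_general (α a : ℝ) (hα : -1 < α) (n : ℕ) :
    ∀ x > (0 : ℝ),
      deriv (deriv (psiLag α a n)) x =
        ((α ^ 2 - 1/4) / x ^ 2 - 2 * a ^ 2 * (2 * n + α + 1) + a ^ 4 * x ^ 2) *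
          psiLag α a n x := by
  intro x hx
  have hψ : psiLag α a n =ᶠ[𝓝 x]
      fun y => ∑ k ∈ range (n + 1), psiLagCoeff α a n k * gaussPow a (α + 1/2 + 2 * k) y :=
    eventuallyEq_of_mem (Ioi_mem_nhds hx) fun y hy => psiLag_eq_sum hy
  have hdiff : ∀ᶠ y in 𝓝 x, ∀ k ∈ range (n + 1),
      DifferentiableAt ℝ (gaussPow a (α + 1/2 + 2 * k)) y :=
    eventually_of_mem (Ioi_mem_nhds hx) fun y hy k _ => (hasDerivAt_gaussPow hy).differentiableAt
  rw [hψ.deriv.deriv_eq, deriv_deriv_sum hdiff fun k _ => hasDerivAt_deriv_gaussPow hx,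
    psiLag_eq_sum hx, mul_sum, ← sub_eq_zero, ← sum_sub_distrib,
    ← sum_gaussPow_eq_zero_of_succ (fun k hk => psiLagCoeff_succ hα a hk) hx]
  exact sum_congr rfl fun k _ => by ring

theorem stmt19 (α a : ℝ) (hα : -1 < α) (ha : 0 < a) (n : ℕ) :
    ∀ x > (0 : ℝ),
      deriv (deriv (psiLag α a n)) x =
        ((α ^ 2 - 1/4) / x ^ 2 - 2 * a ^ 2 * (2 * n + α + 1) + a ^ 4 * x ^ 2) *
          psiLag α a n x :=
  stmt19_general α a hα n
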